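/- For every integer n ≥ 1, the number of plateau-free Motzkin paths satisfies c(n,0) = c(n-1,0) + c(n-2,0) + Σ_{k=2}^{n-2} c(k,0)·c(n-k-2,0), where c(m,0) = 0 for m < 0 and the sum is empty when n < 4. -/

import Mathlib

/-- Steps of a Motzkin path: up, horizontal, down. -/
inductive Step : Type
  | U | H | D
  deriving DecidableEq

/-- A list of steps is a Motzkin path if every prefix has at least as many
up steps as down steps, and the total numbers of up and down steps agree. -/
def IsMotzkin (l : List Step) : Prop :=
  (∀ k : ℕ, (l.take k).count Step.D ≤ (l.take k).count Step.U) ∧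
    l.count Step.U = l.count Step.D

/-- The number of plateaus (occurrences of consecutive steps U, H, D) in a path. -/
def plateauCount (l : List Step) : ℕ :=
  ((Finset.range l.length).filter
    (fun i => (l.drop i).take 3 = [Step.U, Step.H, Step.D])).card

/-- `c n p` is the number of Motzkin paths of length `n` with exactly `p`
plateaus; it is `0` when `n < 0` or `p < 0`. -/
noncomputable def c (n p : ℤ) : ℕ :=
  if 0 ≤ n ∧ 0 ≤ p then
    Nat.card {l : List Step // l.length = n.toNat ∧ IsMotzkin l ∧ plateauCount l = p.toNat}
  else 0

open Step List

instance : Fintype Step := ⟨{Step.U, Step.H, Step.D}, by intro x; cases x <;> simp⟩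

lemma plateauCount_eq_zero_iff {l : List Step} :
    plateauCount l = 0 ↔ ¬ [U, H, D] <:+: l := by
  rw [plateauCount, Finset.card_eq_zero, Finset.filter_eq_empty_iff]
  constructor
  · rintro h ⟨s, t, hst⟩
    have hs : s.length < l.length := by
      rw [← hst]; simp [List.length_append]
    have := h (Finset.mem_range.mpr hs)
    apply this
    rw [← hst, List.append_assoc, List.drop_left]
    simp
  · intro h i _ hi
    apply h
    have h1 : [U,H,D] <+: l.drop i := ⟨(l.drop i).drop 3, by rw [← hi]; simp⟩
    exact h1.isInfix.trans (l.drop_suffix i).isInfix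

@[simp] lemma beq_UD : (Step.U == Step.D) = false := by decide
@[simp] lemma beq_DU : (Step.D == Step.U) = false := by decide
@[simp] lemma beq_HU : (Step.H == Step.U) = false := by decide
@[simp] lemma beq_HD : (Step.H == Step.D) = false := by decide
@[simp] lemma beq_UU : (Step.U == Step.U) = true := by decide
@[simp] lemma beq_DD : (Step.D == Step.D) = true := by decide

lemma isMotzkin_cons_H {t : List Step} : IsMotzkin (Step.H :: t) ↔ IsMotzkin t := by
  constructor
  · rintro ⟨h1, h2⟩
    refine ⟨fun k => ?_, ?_⟩
    · have := h1 (k+1); simpa using this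
    · simpa using h2
  · rintro ⟨h1, h2⟩
    refine ⟨fun k => ?_, ?_⟩
    · cases k with
      | zero => simp
      | succ k => simpa using h1 k
    · simpa using h2

lemma isMotzkin_compose {w v : List Step} (hw : IsMotzkin w) (hv : IsMotzkin v) :
    IsMotzkin (Step.U :: (w ++ Step.D :: v)) := by
  have hwc : w.count Step.U = w.count Step.D := hw.2
  have hvc : v.count Step.U = v.count Step.D := hv.2
  refine ⟨fun k => ?_, ?_⟩
  · cases k with
    | zero => simp
    | succ j =>
      rw [List.take_succ_cons, List.take_append]
      simp only [List.count_cons, List.count_append, beq_UD, beq_DU, beq_UU, beq_DD, Bool.false_eq_true, if_true, if_false]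
      rcases Nat.eq_zero_or_pos (j - w.length) with h0 | hpos
      · rw [h0]
        have h1 := hw.1 j
        have hDle : (w.take j).count Step.D ≤ (w.take j).count Step.U := h1
        simp only [List.take_zero, List.count_nil]
        omega
      · obtain ⟨i, hi⟩ : ∃ i, j - w.length = i + 1 := ⟨j - w.length - 1, by omega⟩
        rw [hi, List.take_succ_cons]
        have hwt : w.take j = w := List.take_of_length_le (by omega)
        have h2 := hv.1 i
        simp only [hwt, List.count_cons, beq_UD, beq_DU, beq_UU, beq_DD, Bool.false_eq_true, if_true, if_false]
        omega
  · simp only [List.count_cons, List.count_append, beq_UD, beq_DU, beq_UU, beq_DD, Bool.false_eq_true, if_true, if_false]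
    omega

lemma decomp_len_le {w v w' v' : List Step}
    (hw : w.count Step.U = w.count Step.D)
    (hw' : ∀ k, (w'.take k).count Step.D ≤ (w'.take k).count Step.U)
    (h : w ++ Step.D :: v = w' ++ Step.D :: v') : w'.length ≤ w.length := by
  by_contra hlt
  push_neg at hlt
  have ht := congrArg (List.take (w.length + 1)) h
  rw [List.take_append, List.take_append] at ht
  have h1 : w.take (w.length + 1) = w := List.take_of_length_le (by omega)
  have h2 : w.length + 1 - w.length = 1 := by omega
  have h3 : w.length + 1 - w'.length = 0 := by omega
  rw [h1, h2, h3] at ht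
  simp only [List.take_succ_cons, List.take_zero, List.append_nil] at ht
  have hcD := congrArg (List.count Step.D) ht
  have hcU := congrArg (List.count Step.U) ht
  have h4 := hw' (w.length + 1)
  simp only [List.count_append, List.count_cons, List.count_nil, beq_UD, beq_DU, beq_UU,
    beq_DD, Bool.false_eq_true, if_true, if_false] at hcD hcU
  omega

lemma decomp_unique {w v w' v' : List Step} (hw : IsMotzkin w) (hw' : IsMotzkin w')
    (h : w ++ Step.D :: v = w' ++ Step.D :: v') : w = w' ∧ v = v' := by
  have hlen : w.length = w'.length :=
    le_antisymm (decomp_len_le hw'.2 hw.1 h.symm) (decomp_len_le hw.2 hw'.1 h)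
  obtain ⟨h1, h2⟩ := List.append_inj h hlen
  exact ⟨h1, by injection h2⟩

lemma decomp_exists {l : List Step} (hl : IsMotzkin (Step.U :: l)) :
    ∃ w v, l = w ++ Step.D :: v ∧ IsMotzkin w ∧ IsMotzkin v := by
  have hcnt : l.count Step.D = l.count Step.U + 1 := by
    have := hl.2
    simp only [List.count_cons, beq_UD, beq_DU, beq_UU, beq_DD, Bool.false_eq_true,
      if_true, if_false] at this
    omega
  have hpre : ∀ k, (l.take k).count Step.D ≤ (l.take k).count Step.U + 1 := by
    intro k
    have := hl.1 (k + 1)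
    simp only [List.take_succ_cons, List.count_cons, beq_UD, beq_DU, beq_UU, beq_DD,
      Bool.false_eq_true, if_true, if_false] at this
    omega
  have hlen : 1 ≤ l.length := by
    rcases l with _ | ⟨a, t⟩
    · simp at hcnt
    · simp
  have hex : ∃ i, (l.take (i + 1)).count Step.U < (l.take (i + 1)).count Step.D := by
    refine ⟨l.length - 1, ?_⟩
    rw [Nat.sub_add_cancel hlen, List.take_length]
    omega
  classical
  set i := Nat.find hex with hidef
  have hfind := Nat.find_spec hex
  have hmin : ∀ j, j ≤ i → (l.take j).count Step.D ≤ (l.take j).count Step.U := by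
    intro j hj
    cases j with
    | zero => simp
    | succ j' =>
      have := Nat.find_min hex (m := j') (by omega)
      omega
  have hilt : i < l.length := by
    by_contra hge
    push_neg at hge
    have := hmin i le_rfl
    rw [List.take_of_length_le hge] at this
    have h2 : (l.take (i+1)) = l := List.take_of_length_le (by omega)
    rw [h2] at hfind
    omega
  have htake : l.take (i + 1) = l.take i ++ [l[i]] := by
    rw [List.take_succ, List.getElem?_eq_getElem hilt]
    rfl
  have hWcnt : (l.take i).count Step.U = (l.take i).count Step.D ∧ l[i] = Step.D := by
    have h1 := hmin i le_rfl
    cases he : l[i] <;>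
    · rw [htake, he] at hfind
      simp only [List.count_append, List.count_cons, List.count_nil, beq_UD, beq_DU, beq_HU,
        beq_HD, beq_UU, beq_DD, Bool.false_eq_true, if_true, if_false] at hfind
      first
        | (exact ⟨by omega, rfl⟩)
        | omega
  refine ⟨l.take i, l.drop (i + 1), ?_, ⟨?_, hWcnt.1⟩, ⟨?_, ?_⟩⟩
  · conv_lhs => rw [← List.take_append_drop i l]
    rw [List.drop_eq_getElem_cons hilt, hWcnt.2]
  · intro k
    rw [List.take_take]
    exact hmin _ (min_le_right _ _)
  · -- prefix condition for v = l.drop (i+1)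
    intro k
    have heq : l.take (i + 1 + k) = l.take i ++ Step.D :: (l.drop (i+1)).take k := by
      conv_lhs => rw [← List.take_append_drop (i+1) l]
      rw [List.take_append]
      have : (l.take (i+1)).take (i+1+k) = l.take (i+1) := by
        rw [List.take_take]; congr 1; omega
      rw [this, htake, hWcnt.2]
      have hlen2 : (l.take i ++ [Step.D]).length = i + 1 := by
        simp only [List.length_append, List.length_take, List.length_cons, List.length_nil]
        omega
      rw [hlen2]
      have : i + 1 + k - (i + 1) = k := by omega
      rw [this, List.append_assoc]
      rfl
    have := hpre (i + 1 + k)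
    rw [heq] at this
    simp only [List.count_append, List.count_cons, beq_UD, beq_DU, beq_UU, beq_DD,
      Bool.false_eq_true, if_true, if_false] at this
    have h1 := hWcnt.1
    omega
  · -- total counts for v
    have heq : l = l.take i ++ Step.D :: l.drop (i+1) := by
      conv_lhs => rw [← List.take_append_drop i l]
      rw [List.drop_eq_getElem_cons hilt, hWcnt.2]
    have hD := congrArg (List.count Step.D) heq
    have hU := congrArg (List.count Step.U) heq
    simp only [List.count_append, List.count_cons, beq_UD, beq_DU, beq_UU, beq_DD,
      Bool.false_eq_true, if_true, if_false] at hD hU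
    have h1 := hWcnt.1
    omega

lemma noPlateau_compose_iff {w v : List Step} (hw : IsMotzkin w) :
    ¬[U, H, D] <:+: (Step.U :: (w ++ Step.D :: v)) ↔
      (¬[U, H, D] <:+: w ∧ ¬[U, H, D] <:+: v ∧ w ≠ [Step.H]) := by
  constructor
  · intro hno
    refine ⟨fun hc => hno ?_, fun hc => hno ?_, fun hc => hno ?_⟩
    · exact hc.trans ⟨[Step.U], Step.D :: v, by simp⟩
    · exact hc.trans ⟨Step.U :: w ++ [Step.D], [], by simp⟩
    · subst hc
      exact ⟨[], v, by simp⟩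
  · rintro ⟨hnw, hnv, hne⟩ ⟨s, t, hst⟩
    rcases s with _ | ⟨a, s'⟩
    · -- pattern at the very start
      simp only [List.nil_append, List.cons_append] at hst
      injection hst with _ hst
      rcases w with _ | ⟨b, w'⟩
      · simp at hst
      · simp only [List.cons_append] at hst
        injection hst with hb hst
        subst hb
        rcases w' with _ | ⟨c, w''⟩
        · exact hne rfl
        · simp only [List.cons_append] at hst
          injection hst with hc hst
          subst hc
          have := hw.1 2
          simp [List.count_cons] at this
    · -- pattern starts at index ≥ 1
      simp only [List.cons_append] at hst
      injection hst with _ hE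
      rw [List.append_assoc] at hE
      -- hE : s' ++ ([U,H,D] ++ t) = w ++ D :: v
      have hcases : s'.length + 2 < w.length ∨ s'.length + 2 = w.length ∨
          s'.length + 1 = w.length ∨ s'.length = w.length ∨ w.length < s'.length := by omega
      rcases hcases with hA | hB | hC | hD | hEc
      · -- fully inside w
        apply hnw
        have h1 : (s' ++ ([U,H,D] ++ t)).take (s'.length + 3) = s' ++ [U,H,D] := by
          rw [List.take_length_add_append]; rfl
        have h2 : (w ++ Step.D :: v).take (s'.length + 3) = w.take (s'.length + 3) :=
          List.take_append_of_le_length (by omega)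
        have ht : s' ++ [U,H,D] = w.take (s'.length + 3) := by rw [← h1, ← h2, hE]
        exact ⟨s', w.drop (s'.length + 3),
          by rw [ht, List.take_append_drop]⟩
      · -- w would end with [U, H] : contradiction with Motzkin
        have h1 : (s' ++ ([U,H,D] ++ t)).take (s'.length + 2) = s' ++ [U,H] := by
          rw [List.take_length_add_append]; rfl
        have h2 : (w ++ Step.D :: v).take (s'.length + 2) = w := by
          rw [List.take_append_of_le_length (by omega), List.take_of_length_le (by omega)]
        have ht : s' ++ [U,H] = w := by rw [← h1, ← h2, hE]
        have hU := congrArg (List.count Step.U) ht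
        have hDc := congrArg (List.count Step.D) ht
        have hpre := hw.1 s'.length
        rw [← ht, List.take_append_of_le_length (le_refl _), List.take_length] at hpre
        simp only [List.count_append, List.count_cons, List.count_nil, beq_UD, beq_DU,
          beq_HU, beq_HD, beq_UU, beq_DD, Bool.false_eq_true, if_true, if_false] at hU hDc
        have htot := hw.2
        omega
      · -- the D of the pattern would be the closing D, so H = D
        have h1 : (s' ++ ([U,H,D] ++ t)).take (s'.length + 2) = (s' ++ [U]) ++ [H] := by
          rw [List.take_append]; simp
        have h2 : (w ++ Step.D :: v).take (s'.length + 2) = w ++ [D] := by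
          rw [show s'.length + 2 = w.length + 1 by omega, List.take_length_add_append]; rfl
        have ht : (s' ++ [U]) ++ [H] = w ++ [D] := by rw [← h1, ← h2, hE]
        have h4 := (List.append_inj ht (by simp; omega)).2
        simp at h4
      · -- the H of the pattern would be the closing D, so U = D
        have h1 : (s' ++ ([U,H,D] ++ t)).take (s'.length + 1) = s' ++ [U] := by
          rw [List.take_length_add_append]; rfl
        have h2 : (w ++ Step.D :: v).take (s'.length + 1) = w ++ [D] := by
          rw [show s'.length + 1 = w.length + 1 by omega, List.take_length_add_append]; rfl
        have ht : s' ++ [U] = w ++ [D] := by rw [← h1, ← h2, hE]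
        have h4 := (List.append_inj ht (by omega)).2
        simp at h4
      · -- fully inside v
        apply hnv
        have h1 : (s' ++ ([U,H,D] ++ t)).drop (w.length + 1)
            = s'.drop (w.length + 1) ++ ([U,H,D] ++ t) := by
          rw [List.drop_append, show w.length + 1 - s'.length = 0 by omega,
            List.drop_zero]
        have h2 : (w ++ Step.D :: v).drop (w.length + 1) = v := by
          rw [List.drop_length_add_append]; rfl
        have ht : s'.drop (w.length + 1) ++ ([U,H,D] ++ t) = v := by rw [← h1, hE, h2]
        exact ⟨s'.drop (w.length + 1), t, by rw [List.append_assoc, ht]⟩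

lemma noPlateau_cons_H {t : List Step} :
    ¬[U, H, D] <:+: (Step.H :: t) ↔ ¬[U, H, D] <:+: t := by
  constructor
  · intro h hc
    obtain ⟨s, t', hst⟩ := hc
    exact h ⟨Step.H :: s, t', by rw [← hst]; rfl⟩
  · intro h hc
    obtain ⟨s, t', hst⟩ := hc
    rcases s with _ | ⟨b, s'⟩
    · simp only [List.nil_append, List.cons_append] at hst
      injection hst with h1 _
      exact Step.noConfusion h1
    · simp only [List.cons_append] at hst
      injection hst with _ h2
      exact h ⟨s', t', h2⟩

/-- The type of plateau-free Motzkin paths of length `m`. -/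
def MT (m : ℕ) : Type :=
  {l : List Step // l.length = m ∧ IsMotzkin l ∧ plateauCount l = 0}

/-- Same, but excluding the path `[H]`. -/
def MT' (m : ℕ) : Type :=
  {l : List Step // (l.length = m ∧ IsMotzkin l ∧ plateauCount l = 0) ∧ l ≠ [Step.H]}

instance (m : ℕ) : Finite (MT m) := by
  have hf : Finite (List.Vector Step m) := Finite.of_fintype _
  apply Finite.of_injective (β := List.Vector Step m) (fun x : MT m => ⟨x.1, x.2.1⟩)
  intro a b h
  apply Subtype.ext
  exact congrArg (fun y : List.Vector Step m => y.val) h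

instance (m : ℕ) : Finite (MT' m) := by
  have hf : Finite (List.Vector Step m) := Finite.of_fintype _
  apply Finite.of_injective (β := List.Vector Step m) (fun x : MT' m => ⟨x.1, x.2.1.1⟩)
  intro a b h
  apply Subtype.ext
  exact congrArg (fun y : List.Vector Step m => y.val) h

/-- Number of plateau-free Motzkin paths of length `m`. -/
noncomputable def N (m : ℕ) : ℕ := Nat.card (MT m)

/-- The composition map realizing the first-return decomposition. -/
def g (m : ℕ) : (MT (m+1) ⊕ (Σ k : Fin (m+1), MT' k × MT (m - k))) → MT (m+2) := by
  rintro (⟨t, htl, htm, htp⟩ | ⟨⟨k, hk⟩, ⟨w, ⟨⟨hwl, hwm, hwp⟩, hwne⟩⟩, ⟨v, hvl, hvm, hvp⟩⟩)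
  · exact ⟨Step.H :: t, by simp [htl], isMotzkin_cons_H.mpr htm,
      plateauCount_eq_zero_iff.mpr (noPlateau_cons_H.mpr (plateauCount_eq_zero_iff.mp htp))⟩
  · refine ⟨Step.U :: (w ++ Step.D :: v), ?_, isMotzkin_compose hwm hvm, ?_⟩
    · simp only [List.length_cons, List.length_append]
      rw [hwl, hvl]
      simp only [List.length_cons]
      omega
    · exact plateauCount_eq_zero_iff.mpr ((noPlateau_compose_iff hwm).mpr
        ⟨plateauCount_eq_zero_iff.mp hwp, plateauCount_eq_zero_iff.mp hvp, hwne⟩)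

lemma g_bijective (m : ℕ) : Function.Bijective (g m) := by
  constructor
  · rintro (⟨t, htl, htm, htp⟩ | ⟨kk, ⟨w, ⟨⟨hwl, hwm, hwp⟩, hwne⟩⟩, ⟨v, hvl, hvm, hvp⟩⟩) <;>
      rintro (⟨t', htl', htm', htp'⟩ | ⟨kk', ⟨w', ⟨⟨hwl', hwm', hwp'⟩, hwne'⟩⟩,
        ⟨v', hvl', hvm', hvp'⟩⟩) <;> intro hxy <;>
      have h2 := congrArg (fun x : MT (m+2) => x.val) hxy <;>
      simp only [g] at h2
    · injection h2 with _ h3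
      exact congrArg Sum.inl (Subtype.ext h3)
    · injection h2 with h3 _
      exact Step.noConfusion h3
    · injection h2 with h3 _
      exact Step.noConfusion h3
    · injection h2 with _ h3
      obtain ⟨hww, hvv⟩ := decomp_unique hwm hwm' h3
      have hkk : kk = kk' := Fin.ext (by rw [← hwl, ← hwl', hww])
      subst hkk
      subst hww
      subst hvv
      rfl
  · rintro ⟨l, hlen, hm, hp⟩
    rcases l with _ | ⟨a, l'⟩
    · simp at hlen
    cases a with
    | D =>
      have := hm.1 1
      simp [List.count_cons] at this
    | H =>
      refine ⟨Sum.inl ⟨l', ?_, isMotzkin_cons_H.mp hm,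
        plateauCount_eq_zero_iff.mpr (noPlateau_cons_H.mp (plateauCount_eq_zero_iff.mp hp))⟩, ?_⟩
      · simpa using hlen
      · rfl
    | U =>
      obtain ⟨w, v, hsplit, hwm, hvm⟩ := decomp_exists hm
      have hlens : w.length + v.length + 1 = m + 2 - 1 := by
        have := congrArg List.length hsplit
        simp only [List.length_append, List.length_cons] at this hlen
        omega
      have hnp := (noPlateau_compose_iff hwm).mp
        (by rw [← hsplit]; exact plateauCount_eq_zero_iff.mp hp)
      refine ⟨Sum.inr ⟨⟨w.length, by omega⟩,
        ⟨w, ⟨⟨rfl, hwm, plateauCount_eq_zero_iff.mpr hnp.1⟩, hnp.2.2⟩⟩,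
        ⟨v, ?_, hvm, plateauCount_eq_zero_iff.mpr hnp.2.1⟩⟩, ?_⟩
      · show v.length = m - w.length
        omega
      · apply Subtype.ext
        show Step.U :: (w ++ Step.D :: v) = Step.U :: l'
        rw [hsplit]

lemma isMotzkin_nil : IsMotzkin ([] : List Step) := ⟨fun k => by simp, rfl⟩

lemma N_zero : N 0 = 1 := by
  have : Unique (MT 0) := by
    refine ⟨⟨⟨[], rfl, isMotzkin_nil, rfl⟩⟩, ?_⟩
    rintro ⟨l, hl, _⟩
    apply Subtype.ext
    simpa [List.length_eq_zero_iff] using hl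
  exact Nat.card_unique

lemma motzkin_length_one {l : List Step} (hl : l.length = 1) (hm : IsMotzkin l) :
    l = [Step.H] := by
  rcases l with _ | ⟨a, l'⟩
  · simp at hl
  · have hl0 : l' = [] := by
      simp only [List.length_cons] at hl
      exact List.eq_nil_of_length_eq_zero (by omega)
    subst hl0
    cases a with
    | H => rfl
    | U => have := hm.2; simp [List.count_cons] at this
    | D => have := hm.2; simp [List.count_cons] at this

lemma N_one : N 1 = 1 := by
  have : Unique (MT 1) := by
    refine ⟨⟨⟨[Step.H], rfl, ?_, rfl⟩⟩, ?_⟩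
    · exact isMotzkin_cons_H.mpr isMotzkin_nil
    · rintro ⟨l, hl, hm, _⟩
      exact Subtype.ext (motzkin_length_one hl hm)
  exact Nat.card_unique

lemma card_MT'_one : Nat.card (MT' 1) = 0 := by
  have : IsEmpty (MT' 1) := by
    constructor
    rintro ⟨l, ⟨hl, hm, _⟩, hne⟩
    exact hne (motzkin_length_one hl hm)
  exact Nat.card_of_isEmpty

lemma card_MT'_ne_one {k : ℕ} (hk : k ≠ 1) : Nat.card (MT' k) = N k := by
  apply Nat.card_congr
  apply Equiv.subtypeEquivRight
  intro l
  constructor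
  · rintro ⟨h, _⟩; exact h
  · intro h
    refine ⟨h, fun hc => ?_⟩
    rw [hc] at h
    exact hk h.1.symm

lemma N_rec (m : ℕ) :
    N (m + 2) = N (m + 1) + N m + ∑ k ∈ Finset.Icc 2 m, N k * N (m - k) := by
  classical
  letI : ∀ k : ℕ, Fintype (MT k) := fun k => Fintype.ofFinite _
  letI : ∀ k : ℕ, Fintype (MT' k) := fun k => Fintype.ofFinite _
  have h1 : N (m + 2) = Nat.card (MT (m+1) ⊕ (Σ k : Fin (m+1), MT' k × MT (m - k))) :=
    (Nat.card_congr (Equiv.ofBijective _ (g_bijective m))).symm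
  rw [h1, Nat.card_eq_fintype_card, Fintype.card_sum, Fintype.card_sigma]
  have hA : Fintype.card (MT (m+1)) = N (m+1) := (Nat.card_eq_fintype_card).symm
  have h2 : ∀ k : Fin (m+1), Fintype.card (MT' (k : ℕ) × MT (m - (k : ℕ)))
      = Nat.card (MT' (k : ℕ)) * N (m - (k : ℕ)) := by
    intro k
    rw [Fintype.card_prod, N, Nat.card_eq_fintype_card, Nat.card_eq_fintype_card]
  have hB : ∑ k : Fin (m+1), Fintype.card (MT' (k : ℕ) × MT (m - (k : ℕ)))
      = ∑ k ∈ Finset.range (m+1), Nat.card (MT' k) * N (m - k) := by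
    rw [← Fin.sum_univ_eq_sum_range (fun k => Nat.card (MT' k) * N (m - k)) (m+1)]
    exact Finset.sum_congr rfl fun k _ => h2 k
  rw [hA, hB]
  have hsplit : Finset.range (m + 1) = insert 0 (Finset.Icc 1 m) := by
    ext x; simp [Finset.mem_Icc, Finset.mem_range]; omega
  have h0 : Nat.card (MT' 0) * N (m - 0) = N m := by
    rw [card_MT'_ne_one (by omega), N_zero]
    simp
  have hC : ∑ k ∈ Finset.range (m+1), Nat.card (MT' k) * N (m - k)
      = N m + ∑ k ∈ Finset.Icc 2 m, N k * N (m - k) := by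
    rw [hsplit, Finset.sum_insert (by simp), h0]
    congr 1
    rcases Nat.eq_zero_or_pos m with hm | hm
    · subst hm
      simp
    · have hsplit2 : Finset.Icc 1 m = insert 1 (Finset.Icc 2 m) := by
        ext x; simp [Finset.mem_Icc]; omega
      rw [hsplit2, Finset.sum_insert (by simp), card_MT'_one]
      simp only [Nat.zero_mul, Nat.zero_add]
      exact Finset.sum_congr rfl fun k hk => by
        rw [card_MT'_ne_one (by simp [Finset.mem_Icc] at hk; omega)]
  rw [hC]
  ring


lemma c_nonneg_eq (n : ℤ) (hn : 0 ≤ n) : c n 0 = N n.toNat := by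
  rw [c, if_pos ⟨hn, le_refl (0 : ℤ)⟩]
  rfl

lemma c_neg (n : ℤ) (hn : n < 0) : c n 0 = 0 := by
  rw [c, if_neg (fun h => absurd h.1 (by omega))]


theorem plateau_free_recursion (n : ℤ) (hn : 1 ≤ n) :
    (c n 0 : ℤ) = (c (n - 1) 0 : ℤ) + (c (n - 2) 0 : ℤ)
      + ∑ k ∈ Finset.Icc (2 : ℤ) (n - 2), (c k 0 : ℤ) * (c (n - k - 2) 0 : ℤ) := by
  rcases eq_or_lt_of_le hn with h1 | h2
  · -- n = 1
    subst h1
    rw [show (1:ℤ) - 1 = 0 by norm_num, show (1:ℤ) - 2 = -1 by norm_num,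
      show Finset.Icc (2:ℤ) (-1) = ∅ from Finset.Icc_eq_empty (by norm_num),
      Finset.sum_empty, c_nonneg_eq 1 (by norm_num), c_nonneg_eq 0 le_rfl,
      c_neg (-1) (by norm_num)]
    norm_num [N_one, N_zero]
  · -- n ≥ 2
    obtain ⟨m, hm⟩ : ∃ m : ℕ, n = (m : ℤ) + 2 := ⟨(n - 2).toNat, by omega⟩
    subst hm
    have e0 : ((m : ℤ) + 2).toNat = m + 2 := by omega
    have e1 : ((m : ℤ) + 2 - 1).toNat = m + 1 := by omega
    have e2 : ((m : ℤ) + 2 - 2).toNat = m := by omega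
    rw [c_nonneg_eq _ (by omega), c_nonneg_eq _ (by omega), c_nonneg_eq _ (by omega),
      e0, e1, e2]
    have hsum : ∑ k ∈ Finset.Icc (2 : ℤ) ((m : ℤ) + 2 - 2), (c k 0 : ℤ) * (c ((m : ℤ) + 2 - k - 2) 0 : ℤ)
        = ∑ k ∈ Finset.Icc 2 m, ((N k : ℤ) * (N (m - k) : ℤ)) := by
      apply Finset.sum_nbij' (i := fun k : ℤ => k.toNat) (j := fun k : ℕ => (k : ℤ))
      · intro a ha
        simp only [Finset.mem_Icc] at ha ⊢
        omega
      · intro a ha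
        simp only [Finset.mem_Icc] at ha ⊢
        omega
      · intro a ha
        simp only [Finset.mem_Icc] at ha
        omega
      · intro a _
        simp
      · intro a ha
        simp only [Finset.mem_Icc] at ha
        rw [c_nonneg_eq _ (by omega), c_nonneg_eq _ (by omega)]
        have he : ((m : ℤ) + 2 - a - 2).toNat = m - a.toNat := by omega
        rw [he]
    rw [hsum]
    have := N_rec m
    push_cast [this]
    ring
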